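/- arXiv:1512.04964 — 3 statements merged into one kernel-verified Lean document; each statement's English description precedes it below -/
import Mathlib

section
/- Given an HLL derivation of a Horn sequent W, Δ, !Γ ⊢ Z, one can construct a tree-like Horn program P that is a strong solution to that sequent (Fairness/completeness of the computational interpretation). -/
/-- Simple products of positive literals over `α`, represented as multisets of literals. -/
abbrev SP (α : Type) := Multiset α

/-- Horn implications `X ⊸ Y` and ⊕-Horn implications `X ⊸ (Y₁ ⊕ Y₂)`
over simple products. -/
inductive HF (α : Type) : Type
  | horn : SP α → SP α → HF α
  | ohorn : SP α → SP α → SP α → HF α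

instance {α : Type} [DecidableEq α] : DecidableEq (HF α)
  | HF.horn a b, HF.horn c d =>
      decidable_of_iff (a = c ∧ b = d) (by simp [HF.horn.injEq])
  | HF.horn _ _, HF.ohorn _ _ _ => isFalse (by simp)
  | HF.ohorn _ _ _, HF.horn _ _ => isFalse (by simp)
  | HF.ohorn a b c, HF.ohorn d e f =>
      decidable_of_iff (a = d ∧ b = e ∧ c = f) (by simp [HF.ohorn.injEq])

/-- Tree-like Horn programs: rooted binary trees whose edges are labelled by
Horn implications; a divergent vertex carries two Horn implications with a
common antecedent `X` (coming from the ⊕-Horn implication `X ⊸ (Y₁ ⊕ Y₂)`). -/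
inductive HT (α : Type) : Type
  | leaf : HT α
  | node1 : SP α → SP α → HT α → HT α
  | node2 : SP α → SP α → SP α → HT α → HT α → HT α

/-- `Sol P W Δ Γ Z`: the tree-like Horn program `P` is a strong solution to the
Horn sequent `W, Δ, !Γ ⊢ Z`: every strong-computation value is defined, every
leaf value equals `Z` (as a multiset), every formula used on an edge is drawn
from `Δ` or `Γ`, and on each root-to-leaf path each formula of the linear part
`Δ` is used exactly once (the formula used on the two edges of a divergent
vertex being the ⊕-Horn implication `X ⊸ (Y₁ ⊕ Y₂)`). -/
def Sol {α : Type} [DecidableEq α] :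
    HT α → SP α → Multiset (HF α) → Multiset (HF α) → SP α → Prop
  | HT.leaf, W, Δ, _, Z => W = Z ∧ Δ = 0
  | HT.node1 X Y t, W, Δ, Γ, Z =>
      X ≠ 0 ∧ Y ≠ 0 ∧ X ≤ W ∧
      ((HF.horn X Y ∈ Δ ∧ Sol t (W - X + Y) (Δ.erase (HF.horn X Y)) Γ Z) ∨
       (HF.horn X Y ∈ Γ ∧ Sol t (W - X + Y) Δ Γ Z))
  | HT.node2 X Y₁ Y₂ t₁ t₂, W, Δ, Γ, Z =>
      X ≠ 0 ∧ Y₁ ≠ 0 ∧ Y₂ ≠ 0 ∧ X ≤ W ∧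
      ((HF.ohorn X Y₁ Y₂ ∈ Δ ∧
          Sol t₁ (W - X + Y₁) (Δ.erase (HF.ohorn X Y₁ Y₂)) Γ Z ∧
          Sol t₂ (W - X + Y₂) (Δ.erase (HF.ohorn X Y₁ Y₂)) Γ Z) ∨
       (HF.ohorn X Y₁ Y₂ ∈ Γ ∧
          Sol t₁ (W - X + Y₁) Δ Γ Z ∧
          Sol t₂ (W - X + Y₂) Δ Γ Z))

/-- The strong-computation value `OUT(P, W, v)` at the vertex addressed by the
path `p` (at a divergent vertex, `false` selects the first child and `true`
the second; a non-divergent vertex is descended by `false`).  `none` means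
undefined. -/
def OUT {α : Type} [DecidableEq α] :
    HT α → SP α → List Bool → Option (SP α)
  | _, W, [] => some W
  | HT.leaf, _, _ :: _ => none
  | HT.node1 X Y t, W, false :: p =>
      if X ≤ W then OUT t (W - X + Y) p else none
  | HT.node1 _ _ _, _, true :: _ => none
  | HT.node2 X Y₁ _ t₁ _, W, false :: p =>
      if X ≤ W then OUT t₁ (W - X + Y₁) p else none
  | HT.node2 X _ Y₂ _ t₂, W, true :: p =>
      if X ≤ W then OUT t₂ (W - X + Y₂) p else none

/-- Horn Linear Logic over simple products represented as multisets of
literals (so the rule L⊗, identifying multiset-equal tensor products, is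
built in).  `HLLm W Δ Γ Z` means the Horn sequent `W, Δ, !Γ ⊢ Z` is
HLL-derivable with the rules I, L⊗, H, M, ⊕-H, L!, W!, C!, Cut. -/
inductive HLLm {α : Type} :
    SP α → Multiset (HF α) → Multiset (HF α) → SP α → Prop
  | id {X : SP α} : X ≠ 0 → HLLm X 0 0 X
  | H {X Y : SP α} : X ≠ 0 → Y ≠ 0 → HLLm X {HF.horn X Y} 0 Y
  | M {X Y V : SP α} {Δ Γ : Multiset (HF α)} :
      HLLm X Δ Γ Y → HLLm (X + V) Δ Γ (Y + V)
  | oH {X Y₁ Y₂ V Z : SP α} {Δ Γ : Multiset (HF α)} :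
      X ≠ 0 → Y₁ ≠ 0 → Y₂ ≠ 0 →
      HLLm (Y₁ + V) Δ Γ Z → HLLm (Y₂ + V) Δ Γ Z →
      HLLm (X + V) (HF.ohorn X Y₁ Y₂ ::ₘ Δ) Γ Z
  | bangL {X Z : SP α} {A : HF α} {Δ Γ : Multiset (HF α)} :
      HLLm X (A ::ₘ Δ) Γ Z → HLLm X Δ (A ::ₘ Γ) Z
  | bangW {X Z : SP α} {A : HF α} {Δ Γ : Multiset (HF α)} :
      HLLm X Δ Γ Z → HLLm X Δ (A ::ₘ Γ) Z
  | bangC {X Z : SP α} {A : HF α} {Δ Γ : Multiset (HF α)} :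
      HLLm X Δ (A ::ₘ A ::ₘ Γ) Z → HLLm X Δ (A ::ₘ Γ) Z
  | cut {W U Z : SP α} {Δ₁ Δ₂ Γ₁ Γ₂ : Multiset (HF α)} :
      HLLm W Δ₁ Γ₁ U → HLLm U Δ₂ Γ₂ Z → HLLm W (Δ₁ + Δ₂) (Γ₁ + Γ₂) Z

lemma Sol_mono {α : Type} [DecidableEq α] {Γ Γ' : Multiset (HF α)}
    (hs : ∀ B ∈ Γ, B ∈ Γ') :
    ∀ (P : HT α) (W : SP α) (Δ : Multiset (HF α)) (Z : SP α),
      Sol P W Δ Γ Z → Sol P W Δ Γ' Z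
  | HT.leaf, W, Δ, Z, h => h
  | HT.node1 X Y t, W, Δ, Z, h => by
      obtain ⟨h1, h2, h3, h4⟩ := h
      refine ⟨h1, h2, h3, ?_⟩
      rcases h4 with ⟨hm, hs'⟩ | ⟨hm, hs'⟩
      · exact Or.inl ⟨hm, Sol_mono hs t _ _ _ hs'⟩
      · exact Or.inr ⟨hs _ hm, Sol_mono hs t _ _ _ hs'⟩
  | HT.node2 X Y₁ Y₂ t₁ t₂, W, Δ, Z, h => by
      obtain ⟨h1, h2, h3, h4, h5⟩ := h
      refine ⟨h1, h2, h3, h4, ?_⟩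
      rcases h5 with ⟨hm, hs₁, hs₂⟩ | ⟨hm, hs₁, hs₂⟩
      · exact Or.inl ⟨hm, Sol_mono hs t₁ _ _ _ hs₁, Sol_mono hs t₂ _ _ _ hs₂⟩
      · exact Or.inr ⟨hs _ hm, Sol_mono hs t₁ _ _ _ hs₁, Sol_mono hs t₂ _ _ _ hs₂⟩

lemma sub_add_shuffle {α : Type} [DecidableEq α] {X W : SP α} (V Y : SP α)
    (h : X ≤ W) : W + V - X + Y = W - X + Y + V := by
  rw [add_comm W V, add_tsub_assoc_of_le h]
  rw [add_comm V (W - X)]; exact add_right_comm _ _ _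

lemma Sol_add {α : Type} [DecidableEq α] (V : SP α) :
    ∀ (P : HT α) (W : SP α) (Δ Γ : Multiset (HF α)) (Z : SP α),
      Sol P W Δ Γ Z → Sol P (W + V) Δ Γ (Z + V)
  | HT.leaf, W, Δ, Γ, Z, h => ⟨by rw [h.1], h.2⟩
  | HT.node1 X Y t, W, Δ, Γ, Z, h => by
      obtain ⟨h1, h2, h3, h4⟩ := h
      refine ⟨h1, h2, le_trans h3 (Multiset.le_add_right _ _), ?_⟩
      rw [sub_add_shuffle V Y h3]
      rcases h4 with ⟨hm, hs'⟩ | ⟨hm, hs'⟩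
      · exact Or.inl ⟨hm, Sol_add V t _ _ _ _ hs'⟩
      · exact Or.inr ⟨hm, Sol_add V t _ _ _ _ hs'⟩
  | HT.node2 X Y₁ Y₂ t₁ t₂, W, Δ, Γ, Z, h => by
      obtain ⟨h1, h2, h3, h4, h5⟩ := h
      refine ⟨h1, h2, h3, le_trans h4 (Multiset.le_add_right _ _), ?_⟩
      rw [sub_add_shuffle V Y₁ h4, sub_add_shuffle V Y₂ h4]
      rcases h5 with ⟨hm, hs₁, hs₂⟩ | ⟨hm, hs₁, hs₂⟩
      · exact Or.inl ⟨hm, Sol_add V t₁ _ _ _ _ hs₁, Sol_add V t₂ _ _ _ _ hs₂⟩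
      · exact Or.inr ⟨hm, Sol_add V t₁ _ _ _ _ hs₁, Sol_add V t₂ _ _ _ _ hs₂⟩

lemma Sol_bangL {α : Type} [DecidableEq α] {A : HF α} :
    ∀ (P : HT α) (W : SP α) (Δ Γ : Multiset (HF α)) (Z : SP α),
      Sol P W (A ::ₘ Δ) Γ Z → Sol P W Δ (A ::ₘ Γ) Z
  | HT.leaf, W, Δ, Γ, Z, h => by
      exact absurd h.2 (by simp)
  | HT.node1 X Y t, W, Δ, Γ, Z, h => by
      obtain ⟨h1, h2, h3, h4⟩ := h
      refine ⟨h1, h2, h3, ?_⟩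
      rcases h4 with ⟨hm, hs'⟩ | ⟨hm, hs'⟩
      · by_cases hAB : HF.horn X Y = A
        · subst hAB
          rw [Multiset.erase_cons_head] at hs'
          exact Or.inr ⟨Multiset.mem_cons_self _ _,
            Sol_mono (fun B hB => Multiset.mem_cons_of_mem hB) t _ _ _ hs'⟩
        · rw [Multiset.erase_cons_tail _ (Ne.symm hAB)] at hs'
          rcases Multiset.mem_cons.mp hm with h' | h'
          · exact absurd h' hAB
          · exact Or.inl ⟨h', Sol_bangL t _ _ _ _ hs'⟩
      · exact Or.inr ⟨Multiset.mem_cons_of_mem hm, Sol_bangL t _ _ _ _ hs'⟩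
  | HT.node2 X Y₁ Y₂ t₁ t₂, W, Δ, Γ, Z, h => by
      obtain ⟨h1, h2, h3, h4, h5⟩ := h
      refine ⟨h1, h2, h3, h4, ?_⟩
      rcases h5 with ⟨hm, hs₁, hs₂⟩ | ⟨hm, hs₁, hs₂⟩
      · by_cases hAB : HF.ohorn X Y₁ Y₂ = A
        · subst hAB
          rw [Multiset.erase_cons_head] at hs₁ hs₂
          exact Or.inr ⟨Multiset.mem_cons_self _ _,
            Sol_mono (fun B hB => Multiset.mem_cons_of_mem hB) t₁ _ _ _ hs₁,
            Sol_mono (fun B hB => Multiset.mem_cons_of_mem hB) t₂ _ _ _ hs₂⟩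
        · rw [Multiset.erase_cons_tail _ (Ne.symm hAB)] at hs₁ hs₂
          rcases Multiset.mem_cons.mp hm with h' | h'
          · exact absurd h' hAB
          · exact Or.inl ⟨h', Sol_bangL t₁ _ _ _ _ hs₁, Sol_bangL t₂ _ _ _ _ hs₂⟩
      · exact Or.inr ⟨Multiset.mem_cons_of_mem hm,
          Sol_bangL t₁ _ _ _ _ hs₁, Sol_bangL t₂ _ _ _ _ hs₂⟩

/-- Graft `Q` onto every leaf of `P`. -/
def graft {α : Type} : HT α → HT α → HT α
  | HT.leaf, Q => Q
  | HT.node1 X Y t, Q => HT.node1 X Y (graft t Q)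
  | HT.node2 X Y₁ Y₂ t₁ t₂, Q => HT.node2 X Y₁ Y₂ (graft t₁ Q) (graft t₂ Q)

lemma Sol_graft {α : Type} [DecidableEq α] {Γ : Multiset (HF α)}
    {Δ₂ : Multiset (HF α)} {U Z : SP α} {Q : HT α}
    (hQ : ∀ (U' : SP α), U' = U → Sol Q U' Δ₂ Γ Z) :
    ∀ (P : HT α) (W : SP α) (Δ₁ : Multiset (HF α)),
      Sol P W Δ₁ Γ U → Sol (graft P Q) W (Δ₁ + Δ₂) Γ Z
  | HT.leaf, W, Δ₁, h => by
      simp only [graft]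
      rw [h.2, zero_add]
      exact hQ W h.1
  | HT.node1 X Y t, W, Δ₁, h => by
      obtain ⟨h1, h2, h3, h4⟩ := h
      refine ⟨h1, h2, h3, ?_⟩
      rcases h4 with ⟨hm, hs'⟩ | ⟨hm, hs'⟩
      · refine Or.inl ⟨Multiset.mem_add.mpr (Or.inl hm), ?_⟩
        rw [Multiset.erase_add_left_pos _ hm]
        exact Sol_graft hQ t _ _ hs'
      · exact Or.inr ⟨hm, Sol_graft hQ t _ _ hs'⟩
  | HT.node2 X Y₁ Y₂ t₁ t₂, W, Δ₁, h => by
      obtain ⟨h1, h2, h3, h4, h5⟩ := h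
      refine ⟨h1, h2, h3, h4, ?_⟩
      rcases h5 with ⟨hm, hs₁, hs₂⟩ | ⟨hm, hs₁, hs₂⟩
      · refine Or.inl ⟨Multiset.mem_add.mpr (Or.inl hm), ?_⟩
        rw [Multiset.erase_add_left_pos _ hm]
        exact ⟨Sol_graft hQ t₁ _ _ hs₁, Sol_graft hQ t₂ _ _ hs₂⟩
      · exact Or.inr ⟨hm, Sol_graft hQ t₁ _ _ hs₁, Sol_graft hQ t₂ _ _ hs₂⟩

/-- Fairness: from an HLL derivation of a Horn sequent
`W, Δ, !Γ ⊢ Z` one can construct a tree-like Horn program that is a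
strong solution to that sequent. -/
theorem HLL_to_program {α : Type} [DecidableEq α]
    (W Z : SP α) (Δ Γ : Multiset (HF α))
    (h : HLLm W Δ Γ Z) :
    ∃ P : HT α, Sol P W Δ Γ Z := by
  induction h with
  | @id X hX => exact ⟨HT.leaf, rfl, rfl⟩
  | @H X Y hX hY =>
      refine ⟨HT.node1 X Y HT.leaf, hX, hY, le_refl X, Or.inl ⟨?_, ?_, ?_⟩⟩
      · simp
      · simp [tsub_self]
      · simp
  | @M X Y V Δ Γ _ ih =>
      obtain ⟨P, hP⟩ := ih
      exact ⟨P, Sol_add V P _ _ _ _ hP⟩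
  | @oH X Y₁ Y₂ V Z Δ Γ hX hY₁ hY₂ _ _ ih₁ ih₂ =>
      obtain ⟨P₁, hP₁⟩ := ih₁
      obtain ⟨P₂, hP₂⟩ := ih₂
      refine ⟨HT.node2 X Y₁ Y₂ P₁ P₂, hX, hY₁, hY₂,
        Multiset.le_add_right _ _, Or.inl ⟨Multiset.mem_cons_self _ _, ?_, ?_⟩⟩
      · rw [Multiset.erase_cons_head, add_tsub_cancel_left, add_comm V Y₁]
        exact hP₁
      · rw [Multiset.erase_cons_head, add_tsub_cancel_left, add_comm V Y₂]
        exact hP₂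
  | bangL _ ih =>
      obtain ⟨P, hP⟩ := ih
      exact ⟨P, Sol_bangL P _ _ _ _ hP⟩
  | bangW _ ih =>
      obtain ⟨P, hP⟩ := ih
      exact ⟨P, Sol_mono (fun B hB => Multiset.mem_cons_of_mem hB) P _ _ _ hP⟩
  | bangC _ ih =>
      obtain ⟨P, hP⟩ := ih
      refine ⟨P, Sol_mono ?_ P _ _ _ hP⟩
      intro B hB
      simp only [Multiset.mem_cons] at hB ⊢
      tauto
  | @cut W' U Z' Δ₁ Δ₂ Γ₁ Γ₂ _ _ ih₁ ih₂ =>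
      obtain ⟨P₁, hP₁⟩ := ih₁
      obtain ⟨P₂, hP₂⟩ := ih₂
      have hP₁' := Sol_mono (Γ' := Γ₁ + Γ₂)
        (fun B hB => Multiset.mem_add.mpr (Or.inl hB)) P₁ _ _ _ hP₁
      have hP₂' := Sol_mono (Γ' := Γ₁ + Γ₂)
        (fun B hB => Multiset.mem_add.mpr (Or.inr hB)) P₂ _ _ _ hP₂
      exact ⟨graft P₁ P₂, Sol_graft (fun U' hE => hE ▸ hP₂') P₁ _ _ hP₁'⟩
end

section
/- If P is a strong solution to X, Γ, !Δ ⊢ Y, then the same tree P run on input X ⊗ V satisfies OUT(P, X⊗V, w) = OUT(P, X, w) ⊗ V for every vertex w, and hence P is a strong solution to (X ⊗ V), Γ, !Δ ⊢ (Y ⊗ V). -/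
lemma frame_step {α : Type} [DecidableEq α] (X V X' Y' : Multiset α)
    (h : X' ≤ X) : X + V - X' + Y' = X - X' + Y' + V := by
  ext a
  have hc := (Multiset.le_iff_count.mp h) a
  simp only [Multiset.count_add, Multiset.count_sub]
  omega

/-- frame property for programs: if `P` is a strong solution to
`X, Γ, !Δ ⊢ Y`, then running `P` on input `X ⊗ V` gives
`OUT(P, X ⊗ V, w) = OUT(P, X, w) ⊗ V` at every vertex `w`, and `P` is a
strong solution to `(X ⊗ V), Γ, !Δ ⊢ (Y ⊗ V)`. -/
theorem frame_property_program {α : Type} [DecidableEq α]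
    (P : HT α) (X V Y : SP α) (Γ Δ : Multiset (HF α))
    (h : Sol P X Γ Δ Y) :
    (∀ (w : List Bool) (U : SP α),
        OUT P X w = some U → OUT P (X + V) w = some (U + V)) ∧
    Sol P (X + V) Γ Δ (Y + V) := by
  induction P generalizing X Γ Y with
  | leaf =>
    obtain ⟨rfl, rfl⟩ := h
    refine ⟨?_, rfl, rfl⟩
    rintro (_ | ⟨b, w⟩) U hU
    · simp_all [OUT]
    · simp [OUT] at hU
  | node1 X' Y' t ih =>
    obtain ⟨hX', hY', hle, hrest⟩ := h
    have hle' : X' ≤ X + V := le_trans hle (Multiset.le_add_right _ _)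
    have heq := frame_step X V X' Y' hle
    have IH : ∀ Γ, Sol t (X - X' + Y') Γ Δ Y →
        (∀ (w : List Bool) (U : SP α), OUT t (X - X' + Y') w = some U →
          OUT t (X - X' + Y' + V) w = some (U + V)) ∧
        Sol t (X - X' + Y' + V) Γ Δ (Y + V) := fun Γ hs => ih _ _ _ hs
    constructor
    · rintro (_ | ⟨b, w⟩) U hU
      · simp [OUT] at hU; simp [OUT, hU]
      · cases b
        · simp only [OUT, if_pos hle] at hU
          rcases hrest with ⟨_, hs⟩ | ⟨_, hs⟩ <;>
            simp [OUT, if_pos hle', heq, (IH _ hs).1 w U hU]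
        · simp [OUT] at hU
    · refine ⟨hX', hY', hle', ?_⟩
      rcases hrest with ⟨hm, hs⟩ | ⟨hm, hs⟩
      · exact Or.inl ⟨hm, heq ▸ (IH _ hs).2⟩
      · exact Or.inr ⟨hm, heq ▸ (IH _ hs).2⟩
  | node2 X' Y₁ Y₂ t₁ t₂ ih₁ ih₂ =>
    obtain ⟨hX', hY₁, hY₂, hle, hrest⟩ := h
    have hle' : X' ≤ X + V := le_trans hle (Multiset.le_add_right _ _)
    have heq₁ := frame_step X V X' Y₁ hle
    have heq₂ := frame_step X V X' Y₂ hle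
    constructor
    · rintro (_ | ⟨b, w⟩) U hU
      · simp [OUT] at hU; simp [OUT, hU]
      · cases b
        · simp only [OUT, if_pos hle] at hU
          rcases hrest with ⟨_, hs, _⟩ | ⟨_, hs, _⟩ <;>
            simp [OUT, if_pos hle', heq₁, (ih₁ _ _ _ hs).1 w U hU]
        · simp only [OUT, if_pos hle] at hU
          rcases hrest with ⟨_, _, hs⟩ | ⟨_, _, hs⟩ <;>
            simp [OUT, if_pos hle', heq₂, (ih₂ _ _ _ hs).1 w U hU]
    · refine ⟨hX', hY₁, hY₂, hle', ?_⟩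
      rcases hrest with ⟨hm, hs₁, hs₂⟩ | ⟨hm, hs₁, hs₂⟩
      · exact Or.inl ⟨hm, heq₁ ▸ (ih₁ _ _ _ hs₁).2, heq₂ ▸ (ih₂ _ _ _ hs₂).2⟩
      · exact Or.inr ⟨hm, heq₁ ▸ (ih₁ _ _ _ hs₁).2, heq₂ ▸ (ih₂ _ _ _ hs₂).2⟩
end

section
/- Strong Forking: if P₁ is a strong solution to (Y₁ ⊗ V), Γ, !Δ ⊢ Z and P₂ is a strong solution to (Y₂ ⊗ V), Γ, !Δ ⊢ Z, then the program P' obtained by creating a new root v₀ with edges to the roots of P₁ and P₂ labelled X ⊸ Y₁ and X ⊸ Y₂ respectively is a strong solution to (X ⊗ V), Γ, X ⊸ (Y₁ ⊕ Y₂), !Δ ⊢ Z. -/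
/-- Strong Forking: if `P₁` is a strong solution to
`(Y₁ ⊗ V), Γ, !Δ ⊢ Z` and `P₂` is a strong solution to
`(Y₂ ⊗ V), Γ, !Δ ⊢ Z`, then the program obtained by creating a new root with
edges labelled `X ⊸ Y₁` and `X ⊸ Y₂` to the roots of `P₁` and `P₂` is a
strong solution to `(X ⊗ V), Γ, X ⊸ (Y₁ ⊕ Y₂), !Δ ⊢ Z`. -/
theorem strong_forking {α : Type} [DecidableEq α]
    (P₁ P₂ : HT α) (X Y₁ Y₂ V Z : SP α) (Γ Δ : Multiset (HF α))
    (hX : X ≠ 0) (hY₁ : Y₁ ≠ 0) (hY₂ : Y₂ ≠ 0)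
    (h₁ : Sol P₁ (Y₁ + V) Γ Δ Z)
    (h₂ : Sol P₂ (Y₂ + V) Γ Δ Z) :
    Sol (HT.node2 X Y₁ Y₂ P₁ P₂) (X + V) (HF.ohorn X Y₁ Y₂ ::ₘ Γ) Δ Z := by
  refine ⟨hX, hY₁, hY₂, Multiset.le_add_right _ _, Or.inl ⟨Multiset.mem_cons_self _ _, ?_, ?_⟩⟩ <;>
    simpa [Multiset.erase_cons_head, add_tsub_cancel_left, add_comm] using (by assumption)
end
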